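/- arXiv:2004.09730 — 2 statements merged into one kernel-verified Lean document; each statement's English description precedes it below -/
import Mathlib

section
/- Let A ∈ ℝ^{m×m} be symmetric and negative definite on the subspace S = {d : Bd = 0, C_α d = 0} where B ∈ ℝ^{m₁×m}, C_α ∈ ℝ^{|α|×m}. Let A_k → A, B_k → B, C_k → C_α be sequences of matrices. Then for all sufficiently large k, A_k is negative definite on S_k = {d : B_k d = 0, C_k d = 0}. (Stability of conditional negative definiteness under perturbation of both the quadratic form and the defining subspace.) -/
/-! Negative definiteness of `A` on `ker B ∩ ker C` is invariant under scaling `d`, so it only has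
to be checked on the unit sphere. There it says that `{(A, B, C)} × sphere` misses a closed set,
and by compactness of the sphere (tube lemma) the same holds near `(A, B, C)`: the condition is
open in the matrix triple. -/

open Matrix Filter Topology Metric

variable {n p q : Type*} [Fintype n]

def NegDefOnKer (A : Matrix n n ℝ) (B : Matrix p n ℝ) (C : Matrix q n ℝ) : Prop :=
  ∀ d : n → ℝ, d ≠ 0 → B *ᵥ d = 0 → C *ᵥ d = 0 → A *ᵥ d ⬝ᵥ d < 0

theorem negDefOnKer_of_forall_mem_sphere {A : Matrix n n ℝ} {B : Matrix p n ℝ}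
    {C : Matrix q n ℝ}
    (h : ∀ d ∈ sphere (0 : n → ℝ) 1, B *ᵥ d = 0 → C *ᵥ d = 0 → A *ᵥ d ⬝ᵥ d < 0) :
    NegDefOnKer A B C := by
  intro d hd hB hC
  have hc : 0 < ‖d‖⁻¹ := inv_pos.mpr (norm_pos_iff.mpr hd)
  have hsphere : ‖d‖⁻¹ • d ∈ sphere (0 : n → ℝ) 1 := by
    simpa using norm_smul_inv_norm (𝕜 := ℝ) hd
  have := h _ hsphere (by simp [mulVec_smul, hB]) (by simp [mulVec_smul, hC])
  simp only [mulVec_smul, smul_dotProduct, dotProduct_smul, smul_eq_mul] at this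
  exact neg_of_mul_neg_right (neg_of_mul_neg_right this hc.le) hc.le

theorem isOpen_setOf_negDefOnKer [Fintype p] [Fintype q] :
    IsOpen {M : Matrix n n ℝ × Matrix p n ℝ × Matrix q n ℝ | NegDefOnKer M.1 M.2.1 M.2.2} := by
  refine isOpen_iff_mem_nhds.mpr fun M₀ hM₀ => ?_
  set F : Set ((Matrix n n ℝ × Matrix p n ℝ × Matrix q n ℝ) × (n → ℝ)) :=
    {z | z.1.2.1 *ᵥ z.2 = 0 ∧ z.1.2.2 *ᵥ z.2 = 0 ∧ 0 ≤ z.1.1 *ᵥ z.2 ⬝ᵥ z.2}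
  have hF : IsClosed F := by
    have hd : Continuous fun z : (Matrix n n ℝ × Matrix p n ℝ × Matrix q n ℝ) × (n → ℝ) => z.2 :=
      continuous_snd
    have hB := (continuous_fst.comp (continuous_snd.comp continuous_fst)).matrix_mulVec hd
    have hC := (continuous_snd.comp (continuous_snd.comp continuous_fst)).matrix_mulVec hd
    have hA := ((continuous_fst.comp continuous_fst).matrix_mulVec hd).dotProduct hd
    exact (isClosed_eq hB continuous_const).inter
      ((isClosed_eq hC continuous_const).inter (isClosed_le continuous_const hA))
  have hM₀F : ∀ d ∈ sphere (0 : n → ℝ) 1, (M₀, d) ∉ F := by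
    rintro d hd ⟨hB, hC, hq⟩
    exact (hM₀ d (ne_of_mem_sphere hd one_ne_zero) hB hC).not_ge hq
  have hnear : ∀ᶠ M in 𝓝 M₀, ∀ d ∈ sphere (0 : n → ℝ) 1, (M, d) ∉ F :=
    (isCompact_sphere (0 : n → ℝ) 1).eventually_forall_of_forall_eventually
      fun d hd => hF.isOpen_compl.mem_nhds (hM₀F d hd)
  filter_upwards [hnear] with M hM
  exact negDefOnKer_of_forall_mem_sphere fun d hd hB hC => not_le.mp fun hq => hM d hd ⟨hB, hC, hq⟩

theorem conditional_negative_definiteness_stable_general {m m₁ a : ℕ}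
    (A : Matrix (Fin m) (Fin m) ℝ) (B : Matrix (Fin m₁) (Fin m) ℝ)
    (C : Matrix (Fin a) (Fin m) ℝ)
    (Ak : ℕ → Matrix (Fin m) (Fin m) ℝ) (Bk : ℕ → Matrix (Fin m₁) (Fin m) ℝ)
    (Ck : ℕ → Matrix (Fin a) (Fin m) ℝ)
    (hAk : Tendsto Ak atTop (nhds A))
    (hBk : Tendsto Bk atTop (nhds B))
    (hCk : Tendsto Ck atTop (nhds C))
    (hneg : ∀ d : Fin m → ℝ, d ≠ 0 → B.mulVec d = 0 → C.mulVec d = 0 →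
      A.mulVec d ⬝ᵥ d < 0) :
    ∀ᶠ k in atTop, ∀ d : Fin m → ℝ, d ≠ 0 → (Bk k).mulVec d = 0 →
      (Ck k).mulVec d = 0 → (Ak k).mulVec d ⬝ᵥ d < 0 :=
  (hAk.prodMk_nhds (hBk.prodMk_nhds hCk)).eventually
    (isOpen_setOf_negDefOnKer.mem_nhds (show NegDefOnKer A B C from hneg))

/-- stability of negative definiteness on a subspace: if `A` is negative
definite on `{d : Bd = 0, C_α d = 0}` and `A_k → A`, `B_k → B`, `C_k → C_α`, then for
all large `k`, `A_k` is negative definite on `{d : B_k d = 0, C_k d = 0}`. -/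
theorem conditional_negative_definiteness_stable {m m₁ a : ℕ}
    (A : Matrix (Fin m) (Fin m) ℝ) (B : Matrix (Fin m₁) (Fin m) ℝ)
    (C : Matrix (Fin a) (Fin m) ℝ)
    (hA : A.IsSymm)
    (Ak : ℕ → Matrix (Fin m) (Fin m) ℝ) (Bk : ℕ → Matrix (Fin m₁) (Fin m) ℝ)
    (Ck : ℕ → Matrix (Fin a) (Fin m) ℝ)
    (hAk : Tendsto Ak atTop (nhds A))
    (hBk : Tendsto Bk atTop (nhds B))
    (hCk : Tendsto Ck atTop (nhds C))
    (hneg : ∀ d : Fin m → ℝ, d ≠ 0 → B.mulVec d = 0 → C.mulVec d = 0 →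
      A.mulVec d ⬝ᵥ d < 0) :
    ∀ᶠ k in atTop, ∀ d : Fin m → ℝ, d ≠ 0 → (Bk k).mulVec d = 0 →
      (Ck k).mulVec d = 0 → (Ak k).mulVec d ⬝ᵥ d < 0 :=
  conditional_negative_definiteness_stable_general A B C Ak Bk Ck hAk hBk hCk hneg
end

section
/- Let K ⊆ ℝⁿ be a nonempty compact convex set with support function δ*(d|K) = max{vᵀd : v ∈ K}, and let T = {d : Bd = 0, Cd ≤ 0} for matrices B ∈ ℝ^{p×n}, C ∈ ℝ^{q×n}. Suppose δ*(d|K) ≥ 0 for all d ∈ T, and the Slater-type condition holds: the rows of B are linearly independent and there exists d̄ with Bd̄ = 0 and Cd̄ < 0 componentwise. Then there exist v ∈ K, u ∈ ℝᵖ and w ∈ ℝ^q with w ≥ 0 such that v + Bᵀu + Cᵀw = 0. -/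
/-!
The set `N = {Bᵀu - Cᵀw : w ≥ 0}` is a closed convex cone, and the conclusion says exactly that
`K` meets `N`. If it did not, separating the compact convex set `K` from the closed cone `N`
(Farkas) would give `d` with `0 ≤ d ⬝ᵥ x` on `N` and `d ⬝ᵥ v < 0` on `K`. The first condition
means `Bd = 0` and `Cd ≤ 0`, and the second makes the support function of `K` negative at `d`.

Closedness of `N` comes from a conic Carathéodory argument: a representation with weights of
minimal support uses generators that are independent modulo `range Bᵀ`, so `N` is a finite union
of images of closed sets under injective linear maps with finite-dimensional domain.
-/

open Function Matrix Set Pointwise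

def Pi.supported (R : Type*) {ι : Type*} [Semiring R] (s : Set ι) : Submodule R (ι → R) :=
  Submodule.pi sᶜ fun _ => ⊥

theorem Pi.mem_supported {R ι : Type*} [Semiring R] {s : Set ι} {v : ι → R} :
    v ∈ Pi.supported R s ↔ support v ⊆ s := by
  rw [support_subset_iff']
  simp [Pi.supported, Submodule.mem_pi]

section ConicCaratheodory

variable {ι : Type*} [Finite ι]

theorem exists_nonneg_sub_smul_eq_zero {w a : ι → ℝ} (hw : 0 ≤ w) (ha : ∃ i, 0 < a i) :
    ∃ t : ℝ, 0 ≤ w - t • a ∧ ∃ i, 0 < a i ∧ (w - t • a) i = 0 := by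
  have := Fintype.ofFinite ι
  obtain ⟨i₀, hi₀, hmin⟩ := (Finset.univ.filter fun i => 0 < a i).exists_min_image
    (fun i => w i / a i) (by obtain ⟨i, hi⟩ := ha; exact ⟨i, by simpa using hi⟩)
  rw [Finset.mem_filter] at hi₀
  refine ⟨w i₀ / a i₀, fun j => ?_, i₀, hi₀.2, by simp [div_mul_cancel₀ _ hi₀.2.ne']⟩
  simp only [Pi.zero_apply, Pi.sub_apply, Pi.smul_apply, smul_eq_mul, sub_nonneg]
  rcases lt_or_ge 0 (a j) with haj | haj
  · exact (le_div_iff₀ haj).1 (hmin j (by simpa using haj))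
  · exact (mul_nonpos_of_nonneg_of_nonpos (div_nonneg (hw i₀) hi₀.2.le) haj).trans (hw j)

theorem exists_nonneg_sub_smul_support_ssubset {w a : ι → ℝ} (hw : 0 ≤ w) (ha : a ≠ 0)
    (haw : support a ⊆ support w) : ∃ t : ℝ, 0 ≤ w - t • a ∧ support (w - t • a) ⊂ support w := by
  wlog hpos : ∃ i, 0 < a i generalizing a
  · obtain ⟨t, ht, hsub⟩ := this (a := -a) (neg_ne_zero.2 ha) (by rwa [support_neg]) (by
      simp only [not_exists, not_lt] at hpos
      obtain ⟨i, hi⟩ := Function.ne_iff.1 ha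
      exact ⟨i, neg_pos.2 ((hpos i).lt_of_ne hi)⟩)
    exact ⟨-t, by simpa using ht, by simpa using hsub⟩
  obtain ⟨t, ht, i, hai, hi⟩ := exists_nonneg_sub_smul_eq_zero hw hpos
  refine ⟨t, ht, ssubset_of_subset_not_subset (fun j hj => ?_) fun h => ?_⟩
  · by_contra hwj
    exact hj (by simp [notMem_support.1 hwj, notMem_support.1 (mt (@haw j) hwj)])
  · exact h (haw hai.ne') hi

variable {E : Type*} [AddCommGroup E] [Module ℝ E]

/-- Conic Carathéodory theorem, with the generators `f (Pi.single i 1)` taken modulo `V`. -/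
theorem exists_nonneg_sub_mem_disjoint_comap_supported (V : Submodule ℝ E)
    (f : (ι → ℝ) →ₗ[ℝ] E) {w : ι → ℝ} (hw : 0 ≤ w) :
    ∃ w', 0 ≤ w' ∧ f w - f w' ∈ V ∧ Disjoint (V.comap f) (Pi.supported ℝ (support w')) := by
  obtain ⟨w', ⟨hw', hw'V⟩, hmin⟩ := (InvImage.wf support wellFounded_lt).has_min
    {w' | 0 ≤ w' ∧ f w - f w' ∈ V} ⟨w, hw, by simp⟩
  refine ⟨w', hw', hw'V, Submodule.disjoint_def.2 fun a haV haw' => by_contra fun ha => ?_⟩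
  obtain ⟨t, ht, hlt⟩ :=
    exists_nonneg_sub_smul_support_ssubset hw' ha (Pi.mem_supported.1 haw')
  refine hmin _ ⟨ht, ?_⟩ hlt
  rw [map_sub, map_smul, sub_sub_eq_add_sub, add_sub_right_comm]
  exact V.add_mem hw'V (V.smul_mem t haV)

end ConicCaratheodory

section Closedness

variable {𝕜 M E : Type*} [NontriviallyNormedField 𝕜] [CompleteSpace 𝕜]
  [AddCommGroup M] [Module 𝕜 M] [TopologicalSpace M] [IsTopologicalAddGroup M]
  [ContinuousSMul 𝕜 M] [T2Space M]
  [AddCommGroup E] [Module 𝕜 E] [TopologicalSpace E] [IsTopologicalAddGroup E]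
  [ContinuousSMul 𝕜 E] [T2Space E]

theorem Submodule.isClosed_add_image_inter (V : Submodule 𝕜 E) [FiniteDimensional 𝕜 V]
    (f : M →ₗ[𝕜] E) {W : Submodule 𝕜 M} [FiniteDimensional 𝕜 W] (hVW : Disjoint (V.comap f) W)
    {S : Set M} (hS : IsClosed S) : IsClosed ((V : Set E) + f '' (S ∩ W)) := by
  let φ : V × W →ₗ[𝕜] E := V.subtype.coprod (f ∘ₗ W.subtype)
  have hφ : LinearMap.ker φ = ⊥ := by
    refine LinearMap.ker_eq_bot'.2 fun ⟨v, x⟩ h => ?_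
    replace h : (v : E) + f x = 0 := h
    have hx : (x : M) = 0 := Submodule.disjoint_def.1 hVW x
      (by rw [Submodule.mem_comap, eq_neg_of_add_eq_zero_right h]; exact V.neg_mem v.2) x.2
    have hv : (v : E) = 0 := by simpa [hx] using h
    simp [Prod.ext_iff, Subtype.ext_iff, hx, hv]
  have himage : (V : Set E) + f '' (S ∩ W) = φ '' (univ ×ˢ (W.subtype ⁻¹' S)) := by
    ext y
    constructor
    · rintro ⟨v, hv, _, ⟨x, ⟨hxS, hxW⟩, rfl⟩, rfl⟩
      exact ⟨(⟨v, hv⟩, ⟨x, hxW⟩), ⟨trivial, hxS⟩, rfl⟩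
    · rintro ⟨⟨v, x⟩, ⟨-, hxS⟩, rfl⟩
      exact ⟨v, v.2, f x, ⟨x, ⟨hxS, x.2⟩, rfl⟩, rfl⟩
  rw [himage]
  exact (LinearMap.isClosedEmbedding_of_injective hφ).isClosedMap _
    (isClosed_univ.prod (hS.preimage continuous_subtype_val))

end Closedness

theorem Submodule.isClosed_add_image_Ici_zero {ι E : Type*} [Finite ι] [AddCommGroup E]
    [Module ℝ E] [TopologicalSpace E] [IsTopologicalAddGroup E] [ContinuousSMul ℝ E] [T2Space E]
    (V : Submodule ℝ E) [FiniteDimensional ℝ V] (f : (ι → ℝ) →ₗ[ℝ] E) :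
    IsClosed ((V : Set E) + f '' Ici 0) := by
  have hunion : (V : Set E) + f '' Ici 0 = ⋃ (s : Set ι) (_ : Disjoint (V.comap f)
      (Pi.supported ℝ s)), (V : Set E) + f '' (Ici 0 ∩ Pi.supported ℝ s) := by
    refine Subset.antisymm ?_
      (iUnion₂_subset fun s _ => add_subset_add_left (image_mono inter_subset_left))
    rintro _ ⟨v, hv, _, ⟨w, hw, rfl⟩, rfl⟩
    obtain ⟨w', hw', hV, hdisj⟩ := exists_nonneg_sub_mem_disjoint_comap_supported V f hw
    refine mem_iUnion₂.2 ⟨support w', hdisj, v + (f w - f w'), V.add_mem hv hV, f w',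
      ⟨w', ⟨hw', Pi.mem_supported.2 subset_rfl⟩, rfl⟩, by dsimp only; abel⟩
  rw [hunion]
  exact isClosed_iUnion_of_finite fun s => isClosed_iUnion_of_finite fun hs =>
    V.isClosed_add_image_inter f hs isClosed_Ici

namespace Matrix

variable {m n l : Type*} [Fintype m] [Fintype l]

def multiplierCone (B : Matrix m n ℝ) (C : Matrix l n ℝ) : ProperCone ℝ (n → ℝ) :=
  ⟨PointedCone.ofSubmodule (LinearMap.range Bᵀ.mulVecLin) ⊔
    (PointedCone.positive ℝ (l → ℝ)).map (-Cᵀ.mulVecLin), by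
    change IsClosed ((_ ⊔ _ : PointedCone ℝ (n → ℝ)) : Set (n → ℝ))
    rw [Submodule.coe_sup, PointedCone.coe_map]
    exact (LinearMap.range Bᵀ.mulVecLin).isClosed_add_image_Ici_zero (-Cᵀ.mulVecLin)⟩

variable {B : Matrix m n ℝ} {C : Matrix l n ℝ}

theorem mem_multiplierCone {x : n → ℝ} :
    x ∈ multiplierCone B C ↔ ∃ u w, 0 ≤ w ∧ Bᵀ *ᵥ u - Cᵀ *ᵥ w = x := by
  change x ∈ (_ ⊔ _ : PointedCone ℝ (n → ℝ)) ↔ _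
  simp only [Submodule.mem_sup, PointedCone.mem_ofSubmodule_iff, LinearMap.mem_range,
    PointedCone.mem_map, PointedCone.mem_positive, LinearMap.neg_apply, mulVecLin_apply,
    exists_exists_eq_and, exists_exists_and_eq_and, ← sub_eq_add_neg]

theorem mulVec_eq_zero_and_nonpos_of_forall_mem_multiplierCone [Fintype n] {d : n → ℝ}
    (hd : ∀ x ∈ multiplierCone B C, 0 ≤ d ⬝ᵥ x) : B *ᵥ d = 0 ∧ C *ᵥ d ≤ 0 := by
  have hdot (u w) (hw : 0 ≤ w) : 0 ≤ (B *ᵥ d) ⬝ᵥ u - (C *ᵥ d) ⬝ᵥ w := by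
    have := hd _ (mem_multiplierCone.2 ⟨u, w, hw, rfl⟩)
    rwa [dotProduct_sub, dotProduct_mulVec, dotProduct_mulVec, vecMul_transpose,
      vecMul_transpose] at this
  constructor
  · refine dotProduct_self_eq_zero.1
      (le_antisymm ?_ (Fintype.sum_nonneg fun _ => mul_self_nonneg _))
    simpa using hdot (-(B *ᵥ d)) 0 le_rfl
  · intro i
    classical
    simpa using hdot 0 (Pi.single i 1) (Pi.single_nonneg.2 zero_le_one)

end Matrix

theorem support_function_duality_general {n p q : ℕ}
    (K : Set (Fin n → ℝ)) (hKne : K.Nonempty) (hKcp : IsCompact K)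
    (hKcv : Convex ℝ K)
    (B : Matrix (Fin p) (Fin n) ℝ) (C : Matrix (Fin q) (Fin n) ℝ)
    (hsupp : ∀ d : Fin n → ℝ, B.mulVec d = 0 → (∀ i, C.mulVec d i ≤ 0) →
      0 ≤ sSup ((fun v => v ⬝ᵥ d) '' K)) :
    ∃ v ∈ K, ∃ u : Fin p → ℝ, ∃ w : Fin q → ℝ,
      (∀ i, 0 ≤ w i) ∧ v + Bᵀ.mulVec u + Cᵀ.mulVec w = 0 := by
  by_contra hno
  have hdisj : Disjoint K (multiplierCone B C) := by
    refine Set.disjoint_left.2 fun v hvK hvN => ?_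
    obtain ⟨u, w, hw, rfl⟩ := mem_multiplierCone.1 hvN
    exact hno ⟨_, hvK, -u, w, hw, by rw [mulVec_neg]; abel⟩
  obtain ⟨f, hfN, hfK⟩ := (multiplierCone B C).hyperplane_separation hKcv hKcp hdisj
  obtain ⟨d, hd⟩ : ∃ d, ∀ x, f x = d ⬝ᵥ x := ⟨_, fun x =>
    (LinearMap.congr_fun ((dotProductEquiv ℝ (Fin n)).apply_symm_apply f.toLinearMap) x).symm⟩
  obtain ⟨hBd, hCd⟩ :=
    mulVec_eq_zero_and_nonpos_of_forall_mem_multiplierCone fun x hx => hd x ▸ hfN x hx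
  refine (hsupp d hBd hCd).not_gt ((hKcp.sSup_lt_iff_of_continuous hKne ?_ 0).2 fun v hv => ?_)
  · fun_prop
  · rw [dotProduct_comm, ← hd]
    exact hfK v hv

/-- Let `K` be a nonempty compact convex set whose support function is
nonnegative on `T = {d : Bd = 0, Cd ≤ 0}`, and suppose the rows of `B` are linearly
independent and there is `d̄` with `Bd̄ = 0`, `Cd̄ < 0` (Slater). Then there are `v ∈ K`,
`u` and `w ≥ 0` with `v + Bᵀu + Cᵀw = 0`. -/
theorem support_function_duality {n p q : ℕ}
    (K : Set (Fin n → ℝ)) (hKne : K.Nonempty) (hKcp : IsCompact K)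
    (hKcv : Convex ℝ K)
    (B : Matrix (Fin p) (Fin n) ℝ) (C : Matrix (Fin q) (Fin n) ℝ)
    (hsupp : ∀ d : Fin n → ℝ, B.mulVec d = 0 → (∀ i, C.mulVec d i ≤ 0) →
      0 ≤ sSup ((fun v => v ⬝ᵥ d) '' K))
    (hB : LinearIndependent ℝ (fun j : Fin p => B j))
    (hSlater : ∃ dbar : Fin n → ℝ, B.mulVec dbar = 0 ∧ ∀ i, C.mulVec dbar i < 0) :
    ∃ v ∈ K, ∃ u : Fin p → ℝ, ∃ w : Fin q → ℝ,
      (∀ i, 0 ≤ w i) ∧ v + Bᵀ.mulVec u + Cᵀ.mulVec w = 0 :=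
  support_function_duality_general K hKne hKcp hKcv B C hsupp
end
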